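/- arXiv:1311.2816 — 7 statements merged into one kernel-verified Lean document; each statement's English description precedes it below -/
import Mathlib

section
/- For coprime positive integers p and q, the generalized Ramanujan sum is multiplicative: c_{pq}^{(β)}(n) = c_p^{(β)}(n) · c_q^{(β)}(n). -/
open scoped Classical

/-- The generalized Ramanujan sum: sum of `e^(2πinh/q^β)` over
nonnegative `h < q^β` such that `h` and `q^β` have no common `β`-th power divisor
other than `1`. -/
noncomputable def ramanujanCexp (β q n : ℕ) : ℂ :=
  ∑ h ∈ (Finset.range (q ^ β)).filter
      (fun h => ∀ d : ℕ, d ^ β ∣ h → d ^ β ∣ q ^ β → d ^ β = 1),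
    Complex.exp (2 * Real.pi * Complex.I * n * h / (q ^ β))

/-- Reformulation of the coprimality condition. -/
private lemma rc_cond_iff {β : ℕ} (hβ : 0 < β) (q h : ℕ) :
    (∀ d : ℕ, d ^ β ∣ h → d ^ β ∣ q ^ β → d ^ β = 1) ↔
    (∀ d : ℕ, d ∣ q → d ^ β ∣ h → d = 1) := by
  constructor
  · intro H d hdq hdh
    have := H d hdh ((Nat.pow_dvd_pow_iff hβ.ne').mpr hdq)
    exact Nat.eq_one_of_dvd_one (this ▸ dvd_pow_self d hβ.ne')
  · intro H d hdh hdq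
    have hd : d = 1 := H d ((Nat.pow_dvd_pow_iff hβ.ne').mp hdq) hdh
    simp [hd]

private lemma rc_cond_mod {β : ℕ} (q : ℕ) {h h' : ℕ} (hmod : h % q ^ β = h' % q ^ β) :
    (∀ d : ℕ, d ∣ q → d ^ β ∣ h → d = 1) ↔ (∀ d : ℕ, d ∣ q → d ^ β ∣ h' → d = 1) := by
  have key : ∀ d : ℕ, d ∣ q → (d ^ β ∣ h ↔ d ^ β ∣ h') := by
    intro d hdq
    have hdvd : d ^ β ∣ q ^ β := pow_dvd_pow_of_dvd hdq β
    have : h ≡ h' [MOD d ^ β] := (Nat.ModEq.of_dvd hdvd (hmod : h ≡ h' [MOD q ^ β]))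
    constructor
    · intro hh
      exact (Nat.modEq_zero_iff_dvd).mp (this.symm.trans ((Nat.modEq_zero_iff_dvd).mpr hh))
    · intro hh
      exact (Nat.modEq_zero_iff_dvd).mp (this.trans ((Nat.modEq_zero_iff_dvd).mpr hh))
  constructor
  · intro H d hdq hdh
    exact H d hdq ((key d hdq).mpr hdh)
  · intro H d hdq hdh
    exact H d hdq ((key d hdq).mp hdh)

private lemma rc_cond_mul {β : ℕ} {c q : ℕ} (hc : Nat.Coprime c q) (a : ℕ) :
    (∀ d : ℕ, d ∣ q → d ^ β ∣ a * c → d = 1) ↔ (∀ d : ℕ, d ∣ q → d ^ β ∣ a → d = 1) := by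
  have key : ∀ d : ℕ, d ∣ q → (d ^ β ∣ a * c ↔ d ^ β ∣ a) := by
    intro d hdq
    have hcop : (d ^ β).Coprime c := ((Nat.Coprime.coprime_dvd_right hdq hc).symm.pow_left β)
    constructor
    · intro hh
      exact hcop.dvd_of_dvd_mul_right hh
    · intro hh
      exact hh.mul_right c
  constructor
  · intro H d hdq hdh
    exact H d hdq ((key d hdq).mpr hdh)
  · intro H d hdq hdh
    exact H d hdq ((key d hdq).mp hdh)

private lemma rc_cond_split {β : ℕ} {p q : ℕ} (hpq : Nat.Coprime p q) (h : ℕ) :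
    (∀ d : ℕ, d ∣ p * q → d ^ β ∣ h → d = 1) ↔
    ((∀ d : ℕ, d ∣ p → d ^ β ∣ h → d = 1) ∧ (∀ d : ℕ, d ∣ q → d ^ β ∣ h → d = 1)) := by
  constructor
  · intro H
    exact ⟨fun d hd hdh => H d (hd.mul_right q) hdh,
           fun d hd hdh => H d (hd.mul_left p) hdh⟩
  · rintro ⟨Hp, Hq⟩ d hd hdh
    have h1 : Nat.gcd d p = 1 :=
      Hp (Nat.gcd d p) (Nat.gcd_dvd_right d p)
        ((pow_dvd_pow_of_dvd (Nat.gcd_dvd_left d p) β).trans hdh)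
    have h2 : Nat.gcd d q = 1 :=
      Hq (Nat.gcd d q) (Nat.gcd_dvd_right d q)
        ((pow_dvd_pow_of_dvd (Nat.gcd_dvd_left d q) β).trans hdh)
    have hcop : Nat.Coprime d (p * q) := Nat.Coprime.mul_right h1 h2
    exact Nat.eq_one_of_dvd_one (hcop ▸ Nat.dvd_gcd dvd_rfl hd)

/-- exp is unchanged by reducing the numerator mod m. -/
private lemma rc_exp_mod (n m k : ℕ) (hm : 0 < m) :
    Complex.exp (2 * Real.pi * Complex.I * n * ((k % m : ℕ) : ℂ) / m)
      = Complex.exp (2 * Real.pi * Complex.I * n * (k : ℂ) / m) := by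
  have hm' : (m : ℂ) ≠ 0 := Nat.cast_ne_zero.mpr hm.ne'
  conv_rhs => rw [← Nat.mod_add_div k m]
  have expand : (2 * (Real.pi : ℂ) * Complex.I * n * (((k % m : ℕ) : ℂ) + (m : ℂ) * ((k / m : ℕ) : ℂ)) / m)
      = 2 * Real.pi * Complex.I * n * ((k % m : ℕ) : ℂ) / m
        + ((n * (k / m) : ℕ) : ℂ) * (2 * Real.pi * Complex.I) := by
    push_cast
    field_simp
  have one : Complex.exp ((n : ℂ) * ((k / m : ℕ) : ℂ) * (2 * Real.pi * Complex.I)) = 1 := by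
    have h := Complex.exp_int_mul_two_pi_mul_I ((n * (k / m) : ℕ) : ℤ)
    push_cast at h
    exact h
  push_cast
  push_cast at expand
  rw [expand, Complex.exp_add, one, mul_one]

theorem ramanujanCexp_multiplicative (β n p q : ℕ) (hβ : 0 < β) (hn : 0 < n)
    (hp : 0 < p) (hq : 0 < q) (hpq : Nat.Coprime p q) :
    ramanujanCexp β (p * q) n = ramanujanCexp β p n * ramanujanCexp β q n := by
  classical
  set P := p ^ β with hP
  set Q := q ^ β with hQ
  have hP0 : 0 < P := pow_pos hp β
  have hQ0 : 0 < Q := pow_pos hq β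
  have hPQcop : Nat.Coprime P Q := by rw [hP, hQ]; exact Nat.Coprime.pow β β hpq
  have hmulpow : (p * q) ^ β = P * Q := by rw [mul_pow]
  unfold ramanujanCexp
  rw [Finset.sum_mul_sum, ← Finset.sum_product']
  symm
  refine Finset.sum_bij (fun x _ => (x.1 * Q + x.2 * P) % (P * Q)) ?_ ?_ ?_ ?_
  · -- maps into target
    rintro ⟨a, b⟩ hab
    simp only [Finset.mem_product, Finset.mem_filter, Finset.mem_range] at hab
    obtain ⟨⟨haP, haC⟩, ⟨hbQ, hbC⟩⟩ := hab
    simp only [Finset.mem_filter, Finset.mem_range]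
    constructor
    · rw [hmulpow]; exact Nat.mod_lt _ (Nat.mul_pos hP0 hQ0)
    · rw [rc_cond_iff hβ, rc_cond_split hpq]
      constructor
      · -- condition w.r.t. p
        have hmodP : ((a * Q + b * P) % (P * Q)) % P = (a * Q) % P := by
          rw [Nat.mod_mod_of_dvd _ (dvd_mul_right P Q), Nat.add_mul_mod_self_right]
        rw [rc_cond_mod p (hmodP : _ % p ^ β = _ % p ^ β),
            rc_cond_mul (hpq.symm.pow_left β : Nat.Coprime Q p) a]
        rw [rc_cond_iff hβ] at haC
        exact haC
      · have hmodQ : ((a * Q + b * P) % (P * Q)) % Q = (b * P) % Q := by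
          rw [Nat.mod_mod_of_dvd _ (dvd_mul_left Q P), add_comm, Nat.add_mul_mod_self_right]
        rw [rc_cond_mod q (hmodQ : _ % q ^ β = _ % q ^ β),
            rc_cond_mul (hpq.pow_left β : Nat.Coprime P q) b]
        rw [rc_cond_iff hβ] at hbC
        exact hbC
  · -- injective
    rintro ⟨a, b⟩ hab ⟨a', b'⟩ hab' heq
    simp only [Finset.mem_product, Finset.mem_filter, Finset.mem_range] at hab hab'
    have hmod : a * Q + b * P ≡ a' * Q + b' * P [MOD P * Q] := heq
    have hA : a * Q ≡ a' * Q [MOD P] := by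
      have := (hmod.of_dvd (dvd_mul_right P Q) : a * Q + b * P ≡ a' * Q + b' * P [MOD P])
      unfold Nat.ModEq at this ⊢
      rwa [Nat.add_mul_mod_self_right, Nat.add_mul_mod_self_right] at this
    have hB : b * P ≡ b' * P [MOD Q] := by
      have := (hmod.of_dvd (dvd_mul_left Q P) : a * Q + b * P ≡ a' * Q + b' * P [MOD Q])
      unfold Nat.ModEq at this ⊢
      rw [add_comm (a * Q), add_comm (a' * Q)] at this
      rwa [Nat.add_mul_mod_self_right, Nat.add_mul_mod_self_right] at this
    have ha : a = a' := by
      have := Nat.ModEq.cancel_right_of_coprime (hPQcop : Nat.gcd P Q = 1) hA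
      rwa [Nat.ModEq, Nat.mod_eq_of_lt hab.1.1, Nat.mod_eq_of_lt hab'.1.1] at this
    have hb : b = b' := by
      have := Nat.ModEq.cancel_right_of_coprime (hPQcop.symm : Nat.gcd Q P = 1) hB
      rwa [Nat.ModEq, Nat.mod_eq_of_lt hab.2.1, Nat.mod_eq_of_lt hab'.2.1] at this
    simp [ha, hb]
  · -- surjective
    intro h hh
    simp only [Finset.mem_filter, Finset.mem_range] at hh
    obtain ⟨hhlt, hhC⟩ := hh
    rw [hmulpow] at hhlt
    -- the unfiltered map is surjective by cardinality
    have main : ∀ h' < P * Q, ∃ a < P, ∃ b < Q, (a * Q + b * P) % (P * Q) = h' := by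
      intro h' hh'
      have := Finset.surj_on_of_inj_on_of_card_le
        (s := Finset.range P ×ˢ Finset.range Q) (t := Finset.range (P * Q))
        (fun x _ => (x.1 * Q + x.2 * P) % (P * Q))
        (fun x _ => Finset.mem_range.mpr (Nat.mod_lt _ (Nat.mul_pos hP0 hQ0)))
        (by
          rintro ⟨a, b⟩ ⟨a', b'⟩ hab hab' heq
          simp only [Finset.mem_product, Finset.mem_range] at hab hab'
          have hmod : a * Q + b * P ≡ a' * Q + b' * P [MOD P * Q] := heq
          have hA : a * Q ≡ a' * Q [MOD P] := by
            have := (hmod.of_dvd (dvd_mul_right P Q) : _ ≡ _ [MOD P])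
            unfold Nat.ModEq at this ⊢
            rwa [Nat.add_mul_mod_self_right, Nat.add_mul_mod_self_right] at this
          have hB : b * P ≡ b' * P [MOD Q] := by
            have := (hmod.of_dvd (dvd_mul_left Q P) : _ ≡ _ [MOD Q])
            unfold Nat.ModEq at this ⊢
            rw [add_comm (a * Q), add_comm (a' * Q)] at this
            rwa [Nat.add_mul_mod_self_right, Nat.add_mul_mod_self_right] at this
          have ha : a = a' := by
            have := Nat.ModEq.cancel_right_of_coprime (hPQcop : Nat.gcd P Q = 1) hA
            rwa [Nat.ModEq, Nat.mod_eq_of_lt hab.1, Nat.mod_eq_of_lt hab'.1] at this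
          have hb : b = b' := by
            have := Nat.ModEq.cancel_right_of_coprime (hPQcop.symm : Nat.gcd Q P = 1) hB
            rwa [Nat.ModEq, Nat.mod_eq_of_lt hab.2, Nat.mod_eq_of_lt hab'.2] at this
          simp [ha, hb])
        (by simp [Finset.card_product])
        h' (Finset.mem_range.mpr hh')
      obtain ⟨⟨a, b⟩, hab, heq⟩ := this
      simp only [Finset.mem_product, Finset.mem_range] at hab
      exact ⟨a, hab.1, b, hab.2, heq.symm⟩
    obtain ⟨a, haP, b, hbQ, heq⟩ := main h hhlt
    refine ⟨(a, b), ?_, heq⟩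
    simp only [Finset.mem_product, Finset.mem_filter, Finset.mem_range]
    -- transfer the condition back
    rw [rc_cond_iff hβ] at hhC
    rw [← heq, rc_cond_split hpq] at hhC
    obtain ⟨hCp, hCq⟩ := hhC
    have hmodP : ((a * Q + b * P) % (P * Q)) % P = (a * Q) % P := by
      rw [Nat.mod_mod_of_dvd _ (dvd_mul_right P Q), Nat.add_mul_mod_self_right]
    have hmodQ : ((a * Q + b * P) % (P * Q)) % Q = (b * P) % Q := by
      rw [Nat.mod_mod_of_dvd _ (dvd_mul_left Q P), add_comm, Nat.add_mul_mod_self_right]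
    rw [rc_cond_mod p (hmodP : _ % p ^ β = _ % p ^ β),
        rc_cond_mul (hpq.symm.pow_left β : Nat.Coprime Q p) a] at hCp
    rw [rc_cond_mod q (hmodQ : _ % q ^ β = _ % q ^ β),
        rc_cond_mul (hpq.pow_left β : Nat.Coprime P q) b] at hCq
    exact ⟨⟨haP, (rc_cond_iff hβ p a).mpr hCp⟩, ⟨hbQ, (rc_cond_iff hβ q b).mpr hCq⟩⟩
  · -- values agree
    rintro ⟨a, b⟩ hab
    simp only
    have hPc : (P : ℂ) ≠ 0 := Nat.cast_ne_zero.mpr hP0.ne'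
    have hQc : (Q : ℂ) ≠ 0 := Nat.cast_ne_zero.mpr hQ0.ne'
    rw [show (((p * q : ℕ)) : ℂ) ^ β = ((P * Q : ℕ) : ℂ) by rw [hP, hQ]; push_cast; ring]
    rw [rc_exp_mod n (P * Q) (a * Q + b * P) (Nat.mul_pos hP0 hQ0)]
    rw [← Complex.exp_add]
    congr 1
    have e1 : ((P * Q : ℕ) : ℂ) = (p : ℂ) ^ β * (q : ℂ) ^ β := by
      rw [hP, hQ]; push_cast; ring
    have e2 : ((a * Q + b * P : ℕ) : ℂ) = (a : ℂ) * (q : ℂ) ^ β + (b : ℂ) * (p : ℂ) ^ β := by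
      rw [hP, hQ]; push_cast; ring
    have hpc : ((p : ℂ)) ^ β ≠ 0 := pow_ne_zero _ (Nat.cast_ne_zero.mpr hp.ne')
    have hqc : ((q : ℂ)) ^ β ≠ 0 := pow_ne_zero _ (Nat.cast_ne_zero.mpr hq.ne')
    rw [e1, e2]
    field_simp
end

section
/- For β, q, n positive integers, c_q^{(β)}(n) = Σ_{d | q, d^β | n} μ(q/d) · d^β, where μ is the Möbius function. -/
open scoped Classical

open Finset

private lemma sum_exp_div (m n : ℕ) (hm : 0 < m) :
    ∑ k ∈ Finset.range m, Complex.exp (2 * Real.pi * Complex.I * n * k / m)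
      = if m ∣ n then (m : ℂ) else 0 := by
  have hm0 : (m : ℂ) ≠ 0 := Nat.cast_ne_zero.mpr hm.ne'
  set z : ℂ := Complex.exp (2 * Real.pi * Complex.I * n / m) with hz
  have hterm : ∀ k : ℕ, Complex.exp (2 * Real.pi * Complex.I * n * k / m) = z ^ k := by
    intro k
    rw [hz, ← Complex.exp_nat_mul]
    congr 1
    field_simp
  rw [Finset.sum_congr rfl fun k _ => hterm k]
  by_cases hd : m ∣ n
  · obtain ⟨c, rfl⟩ := hd
    have hz1 : z = 1 := by
      rw [hz]
      have : 2 * Real.pi * Complex.I * ((m * c : ℕ) : ℂ) / m = c * (2 * Real.pi * Complex.I) := by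
        push_cast
        field_simp
      rw [this]
      exact Complex.exp_nat_mul_two_pi_mul_I c
    simp [hz1]
  · have hz1 : z ≠ 1 := by
      intro h
      rw [hz, Complex.exp_eq_one_iff] at h
      obtain ⟨t, ht⟩ := h
      apply hd
      have hpi : (2 * Real.pi * Complex.I : ℂ) ≠ 0 := by
        simp [Real.pi_ne_zero, Complex.I_ne_zero]
      have hnc : (n : ℂ) = (t : ℂ) * m := by
        field_simp at ht
        have := mul_right_cancel₀ hpi (by linear_combination (2 * Real.pi * Complex.I) * ht :
          (n : ℂ) * (2 * Real.pi * Complex.I) = ((t : ℂ) * m) * (2 * Real.pi * Complex.I))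
        exact this
      have hni : (n : ℤ) = t * m := by exact_mod_cast hnc
      exact Int.natCast_dvd_natCast.mp (by rw [hni]; exact dvd_mul_left _ _)
    have hzm : z ^ m = 1 := by
      rw [hz, ← Complex.exp_nat_mul]
      have : (m : ℂ) * (2 * Real.pi * Complex.I * n / m) = n * (2 * Real.pi * Complex.I) := by
        field_simp
      rw [this]
      exact Complex.exp_nat_mul_two_pi_mul_I n
    rw [geom_sum_eq hz1, hzm]
    simp [hd]

private lemma lcm_pow_dvd {β : ℕ} (hβ : 0 < β) {a b h : ℕ} (ha : a ^ β ∣ h) (hb : b ^ β ∣ h) :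
    Nat.lcm a b ^ β ∣ h := by
  rcases eq_or_ne h 0 with rfl | hh
  · exact dvd_zero _
  have ha0 : a ≠ 0 := by
    rintro rfl
    rw [zero_pow hβ.ne'] at ha
    exact hh (zero_dvd_iff.mp ha)
  have hb0 : b ≠ 0 := by
    rintro rfl
    rw [zero_pow hβ.ne'] at hb
    exact hh (zero_dvd_iff.mp hb)
  have hl0 : Nat.lcm a b ≠ 0 := Nat.lcm_ne_zero ha0 hb0
  rw [← Nat.factorization_le_iff_dvd (pow_ne_zero _ hl0) hh]
  have ha' := (Nat.factorization_le_iff_dvd (pow_ne_zero _ ha0) hh).mpr ha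
  have hb' := (Nat.factorization_le_iff_dvd (pow_ne_zero _ hb0) hh).mpr hb
  intro p
  have hap := ha' p
  have hbp := hb' p
  rw [Nat.factorization_pow, Finsupp.smul_apply] at hap hbp ⊢
  rw [Nat.factorization_lcm ha0 hb0, Finsupp.sup_apply]
  rcases le_total (a.factorization p) (b.factorization p) with hle | hle
  · rwa [sup_eq_right.mpr hle]
  · rwa [sup_eq_left.mpr hle]

private lemma moebius_indicator (β q h : ℕ) (hβ : 0 < β) (hq : 0 < q) :
    ∑ d ∈ q.divisors.filter (fun d => d ^ β ∣ h), ((ArithmeticFunction.moebius d : ℤ) : ℂ)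
      = if (∀ d : ℕ, d ^ β ∣ h → d ^ β ∣ q ^ β → d ^ β = 1) then 1 else 0 := by
  set S := q.divisors.filter (fun d => d ^ β ∣ h) with hS
  set g := S.lcm id with hg
  have hmemS : ∀ d, d ∈ S ↔ d ∣ q ∧ d ^ β ∣ h := by
    intro d
    simp [hS, Nat.mem_divisors, hq.ne', and_assoc]
  have hgq : g ∣ q := Finset.lcm_dvd fun d hd => ((hmemS d).mp hd).1
  have hgh : g ^ β ∣ h := by
    have : ∀ T : Finset ℕ, (∀ d ∈ T, d ^ β ∣ h) → (T.lcm id) ^ β ∣ h := by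
      intro T
      induction T using Finset.induction_on with
      | empty => intro _; simp
      | insert _ _ hx ih =>
        intro hT
        rw [Finset.lcm_insert]
        exact lcm_pow_dvd hβ (hT _ (Finset.mem_insert_self _ _))
          (ih fun d hd => hT d (Finset.mem_insert_of_mem hd))
    exact this S fun d hd => ((hmemS d).mp hd).2
  have hg0 : g ≠ 0 := fun h0 => hq.ne' (Nat.eq_zero_of_zero_dvd (h0 ▸ hgq))
  have hSg : S = g.divisors := by
    ext d
    rw [hmemS, Nat.mem_divisors]
    constructor
    · intro ⟨h1, h2⟩
      exact ⟨Finset.dvd_lcm ((hmemS d).mpr ⟨h1, h2⟩), hg0⟩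
    · intro ⟨h1, _⟩
      exact ⟨h1.trans hgq, (pow_dvd_pow_of_dvd h1 β).trans hgh⟩
  have key : ∑ d ∈ g.divisors, (ArithmeticFunction.moebius d : ℤ) =
      if g = 1 then 1 else 0 := by
    rw [← ArithmeticFunction.coe_mul_zeta_apply, ArithmeticFunction.moebius_mul_coe_zeta,
      ArithmeticFunction.one_apply]
  have hiff : (∀ d : ℕ, d ^ β ∣ h → d ^ β ∣ q ^ β → d ^ β = 1) ↔ g = 1 := by
    constructor
    · intro hP
      have := hP g hgh (pow_dvd_pow_of_dvd hgq β)
      exact ((pow_eq_one_iff).mp this).resolve_right hβ.ne'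
    · intro hg1 d hd1 hd2
      have hdq : d ∣ q := (Nat.pow_dvd_pow_iff hβ.ne').mp hd2
      have : d ∣ g := Finset.dvd_lcm ((hmemS d).mpr ⟨hdq, hd1⟩)
      rw [hg1] at this
      rw [Nat.eq_one_of_dvd_one this, one_pow]
  rw [hSg, hiff]
  have key' := congrArg (fun z : ℤ => (z : ℂ)) key
  push_cast [apply_ite (fun z : ℤ => (z : ℂ))] at key'
  convert key' using 2

private lemma rc_inner_sum (β q n d : ℕ) (hβ : 0 < β) (hq : 0 < q) (hd : d ∣ q) :
    ∑ h ∈ (Finset.range (q ^ β)).filter (fun h => d ^ β ∣ h),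
        Complex.exp (2 * Real.pi * Complex.I * n * h / (q ^ β))
      = if (q / d) ^ β ∣ n then (((q / d) ^ β : ℕ) : ℂ) else 0 := by
  have hd0 : 0 < d := Nat.pos_of_dvd_of_pos hd hq
  set e := q / d with he
  have hde : d * e = q := Nat.mul_div_cancel' hd
  have he0 : 0 < e := Nat.div_pos (Nat.le_of_dvd hq hd) hd0
  have hm : q ^ β = d ^ β * e ^ β := by rw [← mul_pow, hde]
  have hdb0 : 0 < d ^ β := pow_pos hd0 β
  have heb0 : 0 < e ^ β := pow_pos he0 β
  rw [← sum_exp_div (e ^ β) n heb0]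
  refine Finset.sum_nbij' (fun h => h / d ^ β) (fun k => d ^ β * k) ?_ ?_ ?_ ?_ ?_
  · intro a ha
    rw [Finset.mem_filter, Finset.mem_range] at ha
    rw [Finset.mem_range]
    rw [Nat.div_lt_iff_lt_mul hdb0]
    calc a < q ^ β := ha.1
    _ = e ^ β * d ^ β := by rw [hm]; ring
  · intro k hk
    rw [Finset.mem_range] at hk
    rw [Finset.mem_filter, Finset.mem_range]
    exact ⟨by rw [hm]; exact (mul_lt_mul_iff_right₀ hdb0).mpr hk, Dvd.intro k rfl⟩
  · intro a ha
    rw [Finset.mem_filter] at ha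
    exact Nat.mul_div_cancel' ha.2
  · intro k _
    exact Nat.mul_div_cancel_left k hdb0
  · intro a ha
    rw [Finset.mem_filter] at ha
    obtain ⟨c, rfl⟩ := ha.2
    simp only [Nat.mul_div_cancel_left c hdb0]
    congr 1
    have hdc : (d : ℂ) ^ β ≠ 0 := pow_ne_zero _ (Nat.cast_ne_zero.mpr hd0.ne')
    have hec : (e : ℂ) ^ β ≠ 0 := pow_ne_zero _ (Nat.cast_ne_zero.mpr he0.ne')
    have hqc : (q : ℂ) ^ β = (d : ℂ) ^ β * (e : ℂ) ^ β := by
      rw [← mul_pow]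
      norm_cast
      rw [hde]
    push_cast
    rw [hqc]
    field_simp

theorem ramanujanCexp_eq_moebius_sum (β q n : ℕ) (hβ : 0 < β) (hq : 0 < q) (hn : 0 < n) :
    ramanujanCexp β q n =
      ∑ d ∈ q.divisors.filter (fun d => d ^ β ∣ n),
        ((ArithmeticFunction.moebius (q / d) : ℤ) * (d ^ β : ℤ) : ℂ) := by
  unfold ramanujanCexp
  rw [Finset.sum_filter]
  have step1 : ∀ h : ℕ,
      (if (∀ d : ℕ, d ^ β ∣ h → d ^ β ∣ q ^ β → d ^ β = 1) then
          Complex.exp (2 * Real.pi * Complex.I * n * h / (q ^ β)) else 0)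
        = ∑ d ∈ q.divisors, (if d ^ β ∣ h then
            ((ArithmeticFunction.moebius d : ℤ) : ℂ) *
              Complex.exp (2 * Real.pi * Complex.I * n * h / (q ^ β)) else 0) := by
    intro h
    rw [← Finset.sum_filter, ← Finset.sum_mul, moebius_indicator β q h hβ hq]
    by_cases hP : ∀ d : ℕ, d ^ β ∣ h → d ^ β ∣ q ^ β → d ^ β = 1 <;> simp [hP]
  simp_rw [step1]
  rw [Finset.sum_comm]
  have step2 : ∀ d ∈ q.divisors,
      (∑ h ∈ Finset.range (q ^ β), if d ^ β ∣ h then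
          ((ArithmeticFunction.moebius d : ℤ) : ℂ) *
            Complex.exp (2 * Real.pi * Complex.I * n * h / (q ^ β)) else 0)
        = ((ArithmeticFunction.moebius d : ℤ) : ℂ) *
            (if (q / d) ^ β ∣ n then (((q / d) ^ β : ℕ) : ℂ) else 0) := by
    intro d hd
    rw [Nat.mem_divisors] at hd
    rw [← Finset.sum_filter, ← Finset.mul_sum, rc_inner_sum β q n d hβ hq hd.1]
  rw [Finset.sum_congr rfl step2]
  set f : ℕ → ℂ := fun d => ((ArithmeticFunction.moebius (q / d) : ℤ) : ℂ) *
      (if d ^ β ∣ n then ((d ^ β : ℕ) : ℂ) else 0) with hf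
  have e1 : ∑ d ∈ q.divisors, ((ArithmeticFunction.moebius d : ℤ) : ℂ) *
      (if (q / d) ^ β ∣ n then (((q / d) ^ β : ℕ) : ℂ) else 0) = ∑ d ∈ q.divisors, f (q / d) := by
    refine Finset.sum_congr rfl fun d hd => ?_
    rw [Nat.mem_divisors] at hd
    rw [hf]
    simp only []
    rw [Nat.div_div_self hd.1 hd.2]
  rw [e1, Nat.sum_div_divisors q f, Finset.sum_filter]
  refine Finset.sum_congr rfl fun d hd => ?_
  rw [hf]
  by_cases h : d ^ β ∣ n <;> simp [h]
end

section
/- For Re(s) > 1 and β, n positive integers, Σ_{q=1}^∞ c_q^{(β)}(n)/q^{βs} = σ_{1-s}^{(β)}(n)/ζ(βs). -/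
open scoped Classical

/-- The generalized Ramanujan sum `c_q^{(β)}(n) = ∑_{d ∣ q, d^β ∣ n} μ(q/d) d^β`. -/
noncomputable def cbeta (β q n : ℕ) : ℤ :=
  ∑ d ∈ q.divisors.filter (fun d => d ^ β ∣ n),
    ArithmeticFunction.moebius (q / d) * (d ^ β : ℤ)

/-- The generalized divisor function `σ_z^{(β)}(n) = ∑_{d^β ∣ n} d^(βz)`. -/
noncomputable def sigmaC (β : ℕ) (z : ℂ) (n : ℕ) : ℂ :=
  ∑ d ∈ n.divisors.filter (fun d => d ^ β ∣ n), (d : ℂ) ^ ((β : ℂ) * z)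

open LSeries ArithmeticFunction in
open scoped LSeries.notation in
open scoped ArithmeticFunction.Moebius in
theorem cbeta_dirichlet_series (β n : ℕ) (hβ : 0 < β) (hn : 0 < n)
    (s : ℂ) (hs : 1 < s.re) :
    HasSum (fun q : ℕ => if q = 0 then 0 else (cbeta β q n : ℂ) / (q : ℂ) ^ ((β : ℂ) * s))
      (sigmaC β (1 - s) n / riemannZeta ((β : ℂ) * s)) := by
  set z := (β : ℂ) * s with hz
  have hzre : 1 < z.re := by
    have h1 : z.re = (β : ℝ) * s.re := by
      simp [hz, Complex.mul_re]
    rw [h1]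
    have hβ1 : (1 : ℝ) ≤ (β : ℝ) := by exact_mod_cast hβ
    nlinarith
  set g : ℕ → ℂ := fun d => if d ^ β ∣ n then (d : ℂ) ^ β else 0 with hgdef
  -- L-series of μ
  have hμ : LSeriesHasSum (↗μ) z (riemannZeta z)⁻¹ := by
    have h1 := (LSeriesSummable_moebius_iff.mpr hzre).LSeriesHasSum
    have h2 : LSeries (↗μ) z = (riemannZeta z)⁻¹ := by
      refine eq_inv_of_mul_eq_one_left ?_
      rw [← LSeries_zeta_eq_riemannZeta hzre, mul_comm]
      exact LSeries_zeta_mul_Lseries_moebius hzre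
    rwa [h2] at h1
  -- L-series of g (a finite sum)
  have hg : LSeriesHasSum g z (sigmaC β (1 - s) n) := by
    have hsupp : ∀ q ∉ n.divisors, term g z q = 0 := by
      intro q hq
      rcases eq_or_ne q 0 with rfl | hq0
      · simp [term]
      · have hnd : ¬ q ^ β ∣ n := fun h =>
          hq (Nat.mem_divisors.mpr ⟨dvd_trans (dvd_pow_self q hβ.ne') h, hn.ne'⟩)
        simp [term, hq0, hgdef, hnd]
    have hsum : HasSum (term g z) (∑ q ∈ n.divisors, term g z q) :=
      hasSum_sum_of_ne_finset_zero hsupp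
    have heq : ∑ q ∈ n.divisors, term g z q = sigmaC β (1 - s) n := by
      rw [sigmaC, Finset.sum_filter]
      refine Finset.sum_congr rfl fun q hq => ?_
      have hq0 : q ≠ 0 := Nat.pos_of_mem_divisors hq |>.ne'
      have hqc : (q : ℂ) ≠ 0 := Nat.cast_ne_zero.mpr hq0
      rw [term_of_ne_zero hq0, hgdef]
      by_cases hd : q ^ β ∣ n
      · simp only [hd, if_true]
        rw [show (β : ℂ) * (1 - s) = (β : ℂ) - z by rw [hz]; ring,
          Complex.cpow_sub _ _ hqc, Complex.cpow_natCast]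
      · simp [hd]
    rw [← heq]
    exact hsum
  have hconv := hμ.convolution hg
  have hfun : term (↗μ ⍟ g) z = fun q : ℕ =>
      if q = 0 then 0 else (cbeta β q n : ℂ) / (q : ℂ) ^ z := by
    funext q
    rcases eq_or_ne q 0 with rfl | hq0
    · simp [term]
    · rw [term_of_ne_zero hq0, if_neg hq0]
      congr 1
      rw [convolution_def]
      simp only
      rw [Nat.sum_divisorsAntidiagonal' (f := fun a b => (↗μ a : ℂ) * g b)]
      rw [show (cbeta β q n : ℂ) = ∑ d ∈ q.divisors.filter (fun d => d ^ β ∣ n),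
          (μ (q / d) : ℂ) * (d : ℂ) ^ β by push_cast [cbeta]; norm_num]
      rw [Finset.sum_filter]
      refine Finset.sum_congr rfl fun d hd => ?_
      simp only [hgdef, mul_ite, mul_zero]
  have hval : (riemannZeta z)⁻¹ * sigmaC β (1 - s) n = sigmaC β (1 - s) n / riemannZeta z := by
    rw [div_eq_mul_inv, mul_comm]
  rw [LSeriesHasSum, hfun, hval] at hconv
  exact hconv
end

section
/- For Re(s) > β and β, n positive integers, Σ_{q=1}^∞ c_q^{(β)}(n)/q^{s} = σ_{1-s/β}^{(β)}(n)/ζ(s). -/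
open scoped Classical

theorem cbeta_dirichlet_series' (β n : ℕ) (hβ : 0 < β) (hn : 0 < n)
    (s : ℂ) (hs : (β : ℝ) < s.re) :
    HasSum (fun q : ℕ => if q = 0 then 0 else (cbeta β q n : ℂ) / (q : ℂ) ^ s)
      (sigmaC β (1 - s / (β : ℂ)) n / riemannZeta s) := by
  have hs1 : 1 < s.re := lt_of_le_of_lt (by exact_mod_cast Nat.one_le_cast.mpr hβ) hs
  -- HasSum for the Möbius L-series
  have hzeta : riemannZeta s ≠ 0 := riemannZeta_ne_zero_of_one_lt_re hs1
  have hmusum : LSeriesSummable (fun m => (ArithmeticFunction.moebius m : ℂ)) s :=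
    ArithmeticFunction.LSeriesSummable_moebius_iff.mpr hs1
  have hLmu : LSeries (fun m => (ArithmeticFunction.moebius m : ℂ)) s = (riemannZeta s)⁻¹ := by
    have h := ArithmeticFunction.LSeries_zeta_mul_Lseries_moebius (s := s) hs1
    rw [ArithmeticFunction.LSeries_zeta_eq_riemannZeta hs1] at h
    field_simp at h ⊢
    linear_combination h
  have hmu : HasSum (fun e => LSeries.term (fun m => (ArithmeticFunction.moebius m : ℂ)) s e)
      ((riemannZeta s)⁻¹) := hLmu ▸ hmusum.hasSum
  set D := n.divisors.filter (fun d => d ^ β ∣ n) with hD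
  -- the summand family
  set F : ℕ → ℕ → ℂ := fun d q =>
    if q = 0 then 0 else if d ∣ q then (ArithmeticFunction.moebius (q / d) : ℂ)
      * (d : ℂ) ^ β / (q : ℂ) ^ s else 0 with hF
  have hdpos : ∀ d ∈ D, 0 < d := fun d hd => Nat.pos_of_mem_divisors (Finset.mem_filter.mp hd).1
  have hFsum : ∀ d ∈ D, HasSum (F d) ((riemannZeta s)⁻¹ * ((d : ℂ) ^ β / (d : ℂ) ^ s)) := by
    intro d hd
    have hd0 : d ≠ 0 := (hdpos d hd).ne'
    have hinj : Function.Injective (fun e : ℕ => d * e) :=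
      fun a b h => by
        have : d * a = d * b := h
        exact Nat.eq_of_mul_eq_mul_left (hdpos d hd) this
    have h1 : HasSum (fun e => LSeries.term (fun m => (ArithmeticFunction.moebius m : ℂ)) s e
        * ((d : ℂ) ^ β / (d : ℂ) ^ s)) ((riemannZeta s)⁻¹ * ((d : ℂ) ^ β / (d : ℂ) ^ s)) :=
      hmu.mul_right _
    refine (Function.Injective.hasSum_iff hinj ?_).mp ?_
    · intro q hq
      have : ¬ d ∣ q := by
        rintro ⟨c, rfl⟩
        exact hq ⟨c, rfl⟩
      simp [hF, this]
    · convert h1 using 2 with e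
      rcases eq_or_ne e 0 with rfl | he
      · simp [hF, LSeries.term]
      · have hde : d * e ≠ 0 := by positivity
        have hcast : ((d * e : ℕ) : ℂ) ^ s = (d : ℂ) ^ s * (e : ℂ) ^ s := by
          push_cast
          exact Complex.natCast_mul_natCast_cpow d e s
        have he0 : (e : ℂ) ≠ 0 := by exact_mod_cast he
        have hd0' : (d : ℂ) ≠ 0 := by exact_mod_cast hd0
        have hes : (e : ℂ) ^ s ≠ 0 := by
          simp [Complex.cpow_eq_zero_iff, he0]
        have hds : (d : ℂ) ^ s ≠ 0 := by
          simp [Complex.cpow_eq_zero_iff, hd0']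
        simp only [Function.comp_apply, hF]
        rw [if_neg hde, if_pos (dvd_mul_right d e), Nat.mul_div_cancel_left e (hdpos d hd),
          hcast, LSeries.term_of_ne_zero he]
        field_simp
  have htotal : HasSum (fun q => ∑ d ∈ D, F d q)
      (∑ d ∈ D, (riemannZeta s)⁻¹ * ((d : ℂ) ^ β / (d : ℂ) ^ s)) := hasSum_sum hFsum
  have hfun : (fun q : ℕ => if q = 0 then 0 else (cbeta β q n : ℂ) / (q : ℂ) ^ s)
      = fun q => ∑ d ∈ D, F d q := by
    funext q
    rcases eq_or_ne q 0 with rfl | hq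
    · simp [hF]
    · simp only [hq, if_false]
      have hset : q.divisors.filter (fun d => d ^ β ∣ n) = D.filter (fun d => d ∣ q) := by
        ext d
        simp only [Finset.mem_filter, Nat.mem_divisors, hD]
        constructor
        · rintro ⟨⟨hdq, _⟩, hdn⟩
          exact ⟨⟨⟨dvd_trans (dvd_pow_self d hβ.ne') hdn, hn.ne'⟩, hdn⟩, hdq⟩
        · rintro ⟨⟨_, hdn⟩, hdq⟩
          exact ⟨⟨hdq, hq⟩, hdn⟩
      rw [cbeta, hset]
      push_cast
      rw [Finset.sum_div, Finset.sum_filter]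
      apply Finset.sum_congr rfl
      intro d hd
      by_cases hdq : d ∣ q <;> simp [hF, hq, hdq]
  rw [hfun]
  convert htotal using 1
  rw [sigmaC, Finset.sum_div]
  apply Finset.sum_congr rfl
  intro d hd
  have hd0 : (d : ℂ) ≠ 0 := by exact_mod_cast (hdpos d hd).ne'
  have hβ0 : (β : ℂ) ≠ 0 := by exact_mod_cast hβ.ne'
  have : (β : ℂ) * (1 - s / (β : ℂ)) = (β : ℂ) - s := by field_simp
  rw [this, Complex.cpow_sub _ _ hd0, Complex.cpow_natCast]
  ring
end

section
/- For an integer β > 1 and a positive integer n, the series Σ_{q=1}^∞ c_q^{(β)}(n)/q^β converges to σ_0^{(β)}(n)/ζ(β), where σ_0^{(β)}(n) is the number of divisors of n that are β-th powers. -/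
open scoped Classical

/-- `σ_0^{(β)}(n)`: the number of divisors of `n` that are `β`-th powers. -/
noncomputable def sigmaZero (β n : ℕ) : ℕ :=
  (n.divisors.filter (fun d => d ^ β ∣ n)).card

open ArithmeticFunction ArithmeticFunction.Moebius in
theorem cbeta_div_q_pow_beta_hasSum (β n : ℕ) (hβ : 1 < β) (hn : 0 < n) :
    HasSum (fun q : ℕ => if q = 0 then 0 else (cbeta β q n : ℂ) / (q : ℂ) ^ β)
      ((sigmaZero β n : ℂ) / riemannZeta (β : ℂ)) := by
  have hre : 1 < ((β : ℂ)).re := by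
    simp only [Complex.natCast_re]
    exact_mod_cast hβ
  have hζ : riemannZeta (β : ℂ) ≠ 0 := riemannZeta_ne_zero_of_one_lt_re hre
  -- the Möbius L-series has sum (ζ β)⁻¹
  have hLval : LSeries (fun m => (μ m : ℂ)) (β : ℂ) = (riemannZeta (β : ℂ))⁻¹ := by
    have h1 := LSeries_one_mul_Lseries_moebius hre
    rw [LSeries_one_eq_riemannZeta hre] at h1
    exact eq_inv_of_mul_eq_one_right h1
  have hmu : HasSum (fun e : ℕ => if e = 0 then 0 else (μ e : ℂ) / (e : ℂ) ^ β)
      ((riemannZeta (β : ℂ))⁻¹) := by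
    have hs : LSeriesSummable (fun m => (μ m : ℂ)) (β : ℂ) :=
      LSeriesSummable_moebius_iff.mpr hre
    have h0 := hs.LSeriesHasSum
    rw [hLval] at h0
    have h2 : HasSum (LSeries.term (fun m => (μ m : ℂ)) (β : ℂ)) ((riemannZeta (β : ℂ))⁻¹) := h0
    convert h2 using 1
    funext e
    rcases eq_or_ne e 0 with rfl | he
    · simp [LSeries.term]
    · rw [LSeries.term_of_ne_zero he, if_neg he, Complex.cpow_natCast]
  -- index set of β-th power divisors
  set D := n.divisors.filter (fun d => d ^ β ∣ n) with hD
  -- for each d ∈ D, the shifted series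
  set F : ℕ → ℕ → ℂ := fun d q =>
    if d ∣ q then (μ (q / d) : ℂ) / ((q / d : ℕ) : ℂ) ^ β else 0 with hF
  have hFd : ∀ d ∈ D, HasSum (F d) ((riemannZeta (β : ℂ))⁻¹) := by
    intro d hd
    have hd0 : d ≠ 0 := by
      rcases Finset.mem_filter.mp hd with ⟨hd1, _⟩
      exact Nat.pos_of_mem_divisors hd1 |>.ne'
    have hinj : Function.Injective (fun e : ℕ => d * e) := fun a b h => by
      exact Nat.eq_of_mul_eq_mul_left (Nat.pos_of_ne_zero hd0) h
    refine (hinj.hasSum_iff ?_).mp ?_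
    · intro q hq
      simp only [hF]
      rw [if_neg]
      intro ⟨c, hc⟩
      exact hq ⟨c, hc.symm⟩
    · convert hmu using 1
      funext e
      simp only [hF, Function.comp]
      rw [if_pos (Dvd.intro e rfl), Nat.mul_div_cancel_left e (Nat.pos_of_ne_zero hd0)]
      rcases eq_or_ne e 0 with rfl | he
      · simp
      · rw [if_neg he]
  have hsum : HasSum (fun q => ∑ d ∈ D, F d q) (D.card • (riemannZeta (β : ℂ))⁻¹) := by
    have := hasSum_sum (f := F) (a := fun _ => (riemannZeta (β : ℂ))⁻¹) (s := D) hFd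
    simpa [Finset.sum_const] using this
  have key : (fun q => ∑ d ∈ D, F d q)
      = (fun q : ℕ => if q = 0 then 0 else (cbeta β q n : ℂ) / (q : ℂ) ^ β) := by
    funext q
    rcases eq_or_ne q 0 with rfl | hq
    · simp only [if_pos rfl, hF]
      refine Finset.sum_eq_zero fun d hd => ?_
      rw [if_pos (dvd_zero d), Nat.zero_div]
      simp
    · rw [if_neg hq]
      have hqpow : ((q : ℂ)) ^ β ≠ 0 := pow_ne_zero _ (Nat.cast_ne_zero.mpr hq)
      set S := q.divisors.filter (fun d => d ^ β ∣ n) with hS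
      have hSD : S ⊆ D := by
        intro d hd
        simp only [hS, hD, Finset.mem_filter, Nat.mem_divisors] at hd ⊢
        obtain ⟨⟨hdq, _⟩, hdbn⟩ := hd
        have hdn : d ∣ n := dvd_trans (dvd_pow_self d (by omega : β ≠ 0)) hdbn
        exact ⟨⟨hdn, hn.ne'⟩, hdbn⟩
      rw [cbeta, eq_comm]
      push_cast
      rw [Finset.sum_div, ← Finset.sum_subset hSD]
      · refine Finset.sum_congr rfl fun d hd => ?_
        simp only [hS, Finset.mem_filter, Nat.mem_divisors] at hd
        obtain ⟨⟨hdq, _⟩, hdbn⟩ := hd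
        have hd0 : (d : ℂ) ≠ 0 := by
          have : d ≠ 0 := fun h => hq (by simpa [h] using hdq)
          exact_mod_cast this
        have hdb : ((d : ℂ)) ^ β ≠ 0 := pow_ne_zero _ hd0
        have hx : ((q / d : ℕ) : ℂ) ^ β * (d : ℂ) ^ β = (q : ℂ) ^ β := by
          rw [← mul_pow]
          congr 1
          exact_mod_cast congrArg (Nat.cast : ℕ → ℂ) (Nat.div_mul_cancel hdq)
        simp only [hF, if_pos hdq]
        rw [div_eq_div_iff hqpow (by rw [← hx] at hqpow; exact fun h => hqpow (by rw [h, zero_mul]))]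
        rw [← hx]; ring
      · intro d hdD hdS
        simp only [hF]
        rw [if_neg]
        intro hdq
        apply hdS
        simp only [hS, Finset.mem_filter, Nat.mem_divisors]
        simp only [hD, Finset.mem_filter] at hdD
        exact ⟨⟨hdq, hq⟩, hdD.2⟩
  rw [← key]
  have : (sigmaZero β n : ℂ) / riemannZeta (β : ℂ) = D.card • (riemannZeta (β : ℂ))⁻¹ := by
    rw [sigmaZero, div_eq_mul_inv, nsmul_eq_mul]
  rw [this]
  exact hsum
end

section
/- For Re(s) > 1 and positive integers β, k, m, one has Σ_{n=1}^∞ Λ_{k,m}^{(β)}(n)/n^s = (-1)^k σ_{1-s/β}^{(β)}(m) · ζ^{(k)}(s)/ζ(s), where ζ^{(k)} is the k-th derivative of the Riemann zeta function. -/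
open scoped Classical

/-- The generalized von Mangoldt function `Λ_{k,m}^{(β)}(n) = ∑_{dδ = n} c_d^{(β)}(m) (log δ)^k`. -/
noncomputable def LambdaB (β k m n : ℕ) : ℝ :=
  ∑ d ∈ n.divisors, (cbeta β d m : ℝ) * (Real.log ((n / d : ℕ) : ℝ)) ^ k

open LSeries ArithmeticFunction Complex
open scoped LSeries.notation

theorem LambdaB_dirichlet_series (β k m : ℕ) (hβ : 0 < β) (hk : 0 < k) (hm : 0 < m)
    (s : ℂ) (hs : 1 < s.re) :
    HasSum (fun n : ℕ => if n = 0 then 0 else (LambdaB β k m n : ℂ) / (n : ℂ) ^ s)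
      ((-1) ^ k * sigmaC β (1 - s / (β : ℂ)) m *
        (iteratedDeriv k riemannZeta s / riemannZeta s)) := by
  have hm0 : m ≠ 0 := hm.ne'
  have hζ : riemannZeta s ≠ 0 := riemannZeta_ne_zero_of_one_lt_re hs
  set g0 : ℕ → ℂ := fun n => if n ^ β ∣ m then (n : ℂ) ^ β else 0 with hg0def
  set G : ℕ → ℂ := logMul^[k] 1 with hGdef
  -- value of G
  have hGval : ∀ n : ℕ, G n = ((Real.log n : ℝ) : ℂ) ^ k := by
    intro n
    have key : ∀ (j : ℕ) (f : ℕ → ℂ), logMul^[j] f n = (Complex.log n) ^ j * f n := by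
      intro j
      induction j with
      | zero => intro f; simp
      | succ j ih =>
          intro f
          rw [Function.iterate_succ_apply, ih, logMul, pow_succ]
          ring
    rw [hGdef, key, Pi.one_apply, mul_one, Complex.natCast_log]
  -- HasSum for g0
  have hg0sum : LSeriesHasSum g0 s (sigmaC β (1 - s / (β : ℂ)) m) := by
    unfold LSeriesHasSum
    have hfin : ∀ n ∉ m.divisors, term g0 s n = 0 := by
      intro n hn
      rcases eq_or_ne n 0 with rfl | h0
      · exact term_zero ..
      rw [term_of_ne_zero h0]
      have hnd : ¬ n ^ β ∣ m := fun hd =>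
        hn (Nat.mem_divisors.mpr ⟨dvd_trans (dvd_pow_self n hβ.ne') hd, hm0⟩)
      simp [hg0def, hnd]
    have H : HasSum _ _ := hasSum_sum_of_ne_finset_zero hfin
    convert H using 1
    rw [sigmaC, Finset.sum_filter]
    refine Finset.sum_congr rfl fun d hd => ?_
    have hd0 : d ≠ 0 := (Nat.pos_of_mem_divisors hd).ne'
    rw [term_of_ne_zero hd0]
    simp only [hg0def]
    split_ifs with h
    · have hb : (β : ℂ) ≠ 0 := Nat.cast_ne_zero.mpr hβ.ne'
      have hβs : (β : ℂ) * (1 - s / β) = ((β : ℕ) : ℂ) - s := by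
        field_simp
      rw [hβs, cpow_sub _ _ (Nat.cast_ne_zero.mpr hd0), cpow_natCast, div_eq_mul_inv]
    · simp
  -- HasSum for μ
  have hμsum : LSeriesHasSum ↗ArithmeticFunction.moebius s ((riemannZeta s)⁻¹) := by
    have h2 := LSeries_one_mul_Lseries_moebius hs
    rw [LSeries_one_eq_riemannZeta hs] at h2
    have h1 : LSeries ↗ArithmeticFunction.moebius s = (riemannZeta s)⁻¹ := (inv_eq_of_mul_eq_one_right h2).symm
    exact h1 ▸ (LSeriesSummable_moebius_iff.mpr hs).LSeriesHasSum
  -- HasSum for G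
  have hGsum : LSeriesHasSum G s ((-1) ^ k * iteratedDeriv k riemannZeta s) := by
    have habs : abscissaOfAbsConv (1 : ℕ → ℂ) < (s.re : EReal) := by
      rw [LSeries.abscissaOfAbsConv_one]; exact_mod_cast hs
    have hsum : LSeriesSummable G s :=
      LSeriesSummable_of_abscissaOfAbsConv_lt_re (by rwa [LSeries.absicssaOfAbsConv_logPowMul])
    have h1 : iteratedDeriv k (LSeries 1) s = (-1) ^ k * LSeries G s :=
      LSeries_iteratedDeriv k habs
    have h2 : iteratedDeriv k riemannZeta s = iteratedDeriv k (LSeries 1) s := by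
      refine Filter.EventuallyEq.iteratedDeriv_eq k ?_
      filter_upwards [(isOpen_lt continuous_const continuous_re).mem_nhds hs] with z hz
      exact (LSeries_one_eq_riemannZeta hz).symm
    have hone : ((-1 : ℂ) ^ k) * ((-1 : ℂ) ^ k) = 1 := by
      rw [← mul_pow]; norm_num
    have h3 : LSeries G s = (-1) ^ k * iteratedDeriv k riemannZeta s := by
      rw [h2, h1, ← mul_assoc, hone, one_mul]
    exact h3 ▸ hsum.LSeriesHasSum
  -- identification of μ ⍟ g0 with cbeta
  have hc : ↗ArithmeticFunction.moebius ⍟ g0 = fun n => ((cbeta β n m : ℤ) : ℂ) := by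
    ext n
    rcases eq_or_ne n 0 with rfl | hn
    · simp [cbeta]
    simp only [LSeries.convolution_def]
    rw [
      Nat.sum_divisorsAntidiagonal' (f := fun a b => ((ArithmeticFunction.moebius a : ℤ) : ℂ) * g0 b)]
    simp only [hg0def, mul_ite, mul_zero]
    rw [← Finset.sum_filter, cbeta]
    push_cast
    rfl
  -- main convolution
  have hconv := (hμsum.convolution hg0sum).convolution hGsum
  rw [hc] at hconv
  have key : ∀ {n : ℕ}, n ≠ 0 →
      ((fun n => ((cbeta β n m : ℤ) : ℂ)) ⍟ G) n = ((LambdaB β k m n : ℝ) : ℂ) := by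
    intro n hn
    simp only [LSeries.convolution_def]
    rw [
      Nat.sum_divisorsAntidiagonal (f := fun a b => ((cbeta β a m : ℤ) : ℂ) * G b)]
    rw [LambdaB]
    push_cast
    refine Finset.sum_congr rfl fun d hd => ?_
    rw [hGval]
    push_cast
    ring
  have hfinal := (LSeriesHasSum_congr s _ key).mp hconv
  have hval : (riemannZeta s)⁻¹ * sigmaC β (1 - s / (β : ℂ)) m *
      ((-1) ^ k * iteratedDeriv k riemannZeta s) =
      (-1) ^ k * sigmaC β (1 - s / (β : ℂ)) m *
        (iteratedDeriv k riemannZeta s / riemannZeta s) := by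
    field_simp
  rw [← hval]
  exact hfinal
end

section
/- For fixed positive integers β, m and every ε > 0, Λ_{1,m}^{(β)}(n) = O_ε(n^ε) as n → ∞. -/
open scoped Classical

/-- `a(e) = e^β` if `e ≠ 0` and `e^β ∣ m`, else `0`, as an arithmetic function. -/
noncomputable def aFun (β m : ℕ) : ArithmeticFunction ℝ :=
  ⟨fun e => if e ≠ 0 ∧ e ^ β ∣ m then (e ^ β : ℝ) else 0, by simp⟩

lemma aFun_apply (β m e : ℕ) :
    aFun β m e = if e ≠ 0 ∧ e ^ β ∣ m then (e ^ β : ℝ) else 0 := rfl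

open ArithmeticFunction in
lemma cbeta_eq_mul (β m d : ℕ) :
    (aFun β m * (moebius : ArithmeticFunction ℝ)) d = (cbeta β d m : ℝ) := by
  rw [ArithmeticFunction.mul_apply,
    Nat.sum_divisorsAntidiagonal (fun e f => aFun β m e * (moebius : ArithmeticFunction ℝ) f)]
  rw [cbeta, Int.cast_sum, Finset.sum_filter]
  refine Finset.sum_congr rfl fun e he => ?_
  have he0 : e ≠ 0 := (Nat.pos_of_mem_divisors he).ne'
  rw [aFun_apply]
  by_cases h : e ^ β ∣ m
  · simp [he0, h, mul_comm]
  · simp [he0, h]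

open ArithmeticFunction in
lemma LambdaB_eq_mul (β m n : ℕ) :
    LambdaB β 1 m n = (aFun β m * Λ) n := by
  rw [← moebius_mul_log_eq_vonMangoldt, ← mul_assoc, ArithmeticFunction.mul_apply,
    Nat.sum_divisorsAntidiagonal
      (fun d δ => (aFun β m * (moebius : ArithmeticFunction ℝ)) d * ArithmeticFunction.log δ)]
  rw [LambdaB]
  refine Finset.sum_congr rfl fun d hd => ?_
  rw [cbeta_eq_mul, ArithmeticFunction.log_apply, pow_one]

open Filter in
theorem LambdaB_isBigO (β m : ℕ) (hβ : 0 < β) (hm : 0 < m) (ε : ℝ) (hε : 0 < ε) :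
    (fun n : ℕ => LambdaB β 1 m n) =O[atTop] fun n : ℕ => (n : ℝ) ^ ε := by
  open ArithmeticFunction in
  have h1 : (fun n : ℕ => LambdaB β 1 m n) =O[atTop] fun n : ℕ => Real.log n := by
    apply Asymptotics.IsBigO.of_bound ((m : ℝ) * m)
    filter_upwards [eventually_ge_atTop 1] with n hn
    have hn0 : n ≠ 0 := by omega
    have hlogn : (0:ℝ) ≤ Real.log n := Real.log_natCast_nonneg n
    rw [LambdaB_eq_mul, ArithmeticFunction.mul_apply,
      Nat.sum_divisorsAntidiagonal (fun e f => aFun β m e * Λ f)]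
    have key : ∑ e ∈ n.divisors, aFun β m e * Λ (n / e) ≤ (m : ℝ) * m * Real.log n := by
      calc ∑ e ∈ n.divisors, aFun β m e * Λ (n / e)
          = ∑ e ∈ n.divisors.filter (fun e => e ^ β ∣ m), (e ^ β : ℝ) * Λ (n / e) := by
            rw [Finset.sum_filter]
            refine Finset.sum_congr rfl fun e he => ?_
            have he0 : e ≠ 0 := (Nat.pos_of_mem_divisors he).ne'
            rw [aFun_apply]
            by_cases h : e ^ β ∣ m <;> simp [he0, h]
        _ ≤ ∑ e ∈ n.divisors.filter (fun e => e ^ β ∣ m), (m : ℝ) * Real.log n := by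
            refine Finset.sum_le_sum fun e he => ?_
            simp only [Finset.mem_filter] at he
            have h1 : (e ^ β : ℝ) ≤ m := by
              exact_mod_cast Nat.le_of_dvd hm he.2
            have h2 : Λ (n / e) ≤ Real.log n := by
              refine vonMangoldt_le_log.trans (Real.log_le_log ?_ ?_)
              · have hdvd : e ∣ n := (Nat.mem_divisors.mp he.1).1
                have : 0 < n / e := Nat.div_pos (Nat.le_of_dvd (by omega) hdvd)
                  (Nat.pos_of_mem_divisors he.1)
                exact_mod_cast this
              · exact_mod_cast Nat.cast_le.mpr (Nat.div_le_self n e)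
            exact mul_le_mul h1 h2 vonMangoldt_nonneg (by positivity)
        _ ≤ (m : ℝ) * m * Real.log n := by
            rw [Finset.sum_const, nsmul_eq_mul, mul_assoc]
            have hcard : (n.divisors.filter (fun e => e ^ β ∣ m)).card ≤ m := by
              have hsub : n.divisors.filter (fun e => e ^ β ∣ m) ⊆ Finset.Icc 1 m := by
                intro e he
                simp only [Finset.mem_filter] at he
                have he0 : 0 < e := Nat.pos_of_mem_divisors he.1
                have : e ≤ m := le_trans (Nat.le_self_pow hβ.ne' e) (Nat.le_of_dvd hm he.2)
                exact Finset.mem_Icc.mpr ⟨he0, this⟩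
              calc _ ≤ (Finset.Icc 1 m).card := Finset.card_le_card hsub
                _ = m := by simp
            have : ((n.divisors.filter (fun e => e ^ β ∣ m)).card : ℝ) ≤ m := by
              exact_mod_cast hcard
            exact mul_le_mul_of_nonneg_right this (by positivity)
    have hnonneg : 0 ≤ ∑ e ∈ n.divisors, aFun β m e * Λ (n / e) := by
      refine Finset.sum_nonneg fun e he => mul_nonneg ?_ vonMangoldt_nonneg
      rw [aFun_apply]; split <;> positivity
    rw [Real.norm_of_nonneg hnonneg, Real.norm_of_nonneg hlogn]
    exact key
  have h2 : (fun n : ℕ => Real.log n) =o[atTop] fun n : ℕ => (n : ℝ) ^ ε :=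
    (isLittleO_log_rpow_atTop hε).comp_tendsto tendsto_natCast_atTop_atTop
  exact h1.trans h2.isBigO
end
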